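/- arXiv:1708.01780 — 3 statements merged into one kernel-verified Lean document; each statement's English description precedes it below -/
import Mathlib

section
/- Let R be a commutative unital ring, E a graph, v_0 ∈ E^0 a vertex, and n a positive integer. Then L_R(E(v_0, n)) ≅ L_R(E'(v_0, n)), where E(v_0, n) is E with a 'head' of n new vertices v_1,…,v_n and n new edges e_i from v_i to v_{i−1} attached at v_0, and E'(v_0, n) is E with n new vertices v_1,…,v_n and n new edges e_i each going from v_i directly to v_0. -/
noncomputable section

structure DGraph : Type 1 where
  V : Type
  E : Type
  s : E → V
  r : E → V

namespace DGraph

variable (R : Type) [CommRing R]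

inductive Gen (G : DGraph) : Type
  | vert : G.V → Gen G
  | edge : G.E → Gen G
  | ghost : G.E → Gen G

abbrev FA (G : DGraph) := FreeAlgebra R (Gen G)

def gv (G : DGraph) (v : G.V) : FA R G := FreeAlgebra.ι R (Gen.vert v)
def ge (G : DGraph) (e : G.E) : FA R G := FreeAlgebra.ι R (Gen.edge e)
def gg (G : DGraph) (e : G.E) : FA R G := FreeAlgebra.ι R (Gen.ghost e)

/-- A vertex is regular if it emits a finite nonzero number of edges. -/
def IsRegular (G : DGraph) (v : G.V) : Prop :=
  {e : G.E | G.s e = v}.Finite ∧ {e : G.E | G.s e = v}.Nonempty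

open Classical in
/-- The Leavitt path algebra relations. -/
inductive LRel (G : DGraph) : FA R G → FA R G → Prop
  | vmul (u v : G.V) : LRel G (gv R G u * gv R G v) (if u = v then gv R G u else 0)
  | se (e : G.E) : LRel G (gv R G (G.s e) * ge R G e) (ge R G e)
  | er (e : G.E) : LRel G (ge R G e * gv R G (G.r e)) (ge R G e)
  | rg (e : G.E) : LRel G (gv R G (G.r e) * gg R G e) (gg R G e)
  | gs (e : G.E) : LRel G (gg R G e * gv R G (G.s e)) (gg R G e)
  | ck1 (e f : G.E) : LRel G (gg R G e * ge R G f) (if e = f then gv R G (G.r e) else 0)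
  | ck2 (v : G.V) (h : IsRegular G v) :
      LRel G (h.1.toFinset.sum fun e => ge R G e * gg R G e) (gv R G v)

/-- The Leavitt path algebra of the graph `G` over `R`. -/
abbrev LPA (G : DGraph) : Type := RingQuot (LRel R G)

def Vq (G : DGraph) (v : G.V) : LPA R G := RingQuot.mkAlgHom R (LRel R G) (gv R G v)
def Eq' (G : DGraph) (e : G.E) : LPA R G := RingQuot.mkAlgHom R (LRel R G) (ge R G e)
def Gq (G : DGraph) (e : G.E) : LPA R G := RingQuot.mkAlgHom R (LRel R G) (gg R G e)

def Step (G : DGraph) (v w : G.V) : Prop := ∃ e : G.E, G.s e = v ∧ G.r e = w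
def Reaches (G : DGraph) : G.V → G.V → Prop := Relation.ReflTransGen (Step G)
def Hereditary (G : DGraph) (H : Set G.V) : Prop := ∀ v ∈ H, ∀ w, Reaches G v w → w ∈ H
def HClosure (G : DGraph) (X : Set G.V) : Set G.V := {w | ∃ v ∈ X, Reaches G v w}

def NoSinks (G : DGraph) : Prop := ∀ v : G.V, ∃ e, G.s e = v
def NoSources (G : DGraph) : Prop := ∀ v : G.V, ∃ e, G.r e = v
def FiniteGraph (G : DGraph) : Prop := Finite G.V ∧ Finite G.E

/-- `A` is (isomorphic to) an algebraic Cuntz–Krieger `R`-algebra. -/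
def IsCKAlgebra (A : Type) [Ring A] [Algebra R A] : Prop :=
  ∃ G : DGraph, FiniteGraph G ∧ NoSinks G ∧ NoSources G ∧ Nonempty (LPA R G ≃ₐ[R] A)

end DGraph

open DGraph

/-- `E(v₀,n)`: attach a head `vₙ → ⋯ → v₁ → v₀` at `v₀` (index `i : Fin n` is `v_{i+1}`,
edge `i` is `e_{i+1} : v_{i+1} → v_i`). -/
def attachHead (G : DGraph) (v0 : G.V) (n : ℕ) : DGraph where
  V := G.V ⊕ Fin n
  E := G.E ⊕ Fin n
  s := Sum.elim (fun e => Sum.inl (G.s e)) (fun i => Sum.inr i)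
  r := Sum.elim (fun e => Sum.inl (G.r e)) (fun i =>
    if _ : (i : ℕ) = 0 then Sum.inl v0
    else Sum.inr ⟨(i : ℕ) - 1, Nat.lt_of_le_of_lt (Nat.sub_le _ _) i.isLt⟩)

/-- `E'(v₀,n)`: attach `n` new vertices `v₁,…,vₙ` each with an edge `eᵢ : vᵢ → v₀`. -/
def attachFan (G : DGraph) (v0 : G.V) (n : ℕ) : DGraph where
  V := G.V ⊕ Fin n
  E := G.E ⊕ Fin n
  s := Sum.elim (fun e => Sum.inl (G.s e)) (fun i => Sum.inr i)
  r := Sum.elim (fun e => Sum.inl (G.r e)) (fun _ => Sum.inl v0)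

/-!
Both graphs are `G` with `n` new vertices, each emitting one new edge; they differ only in where
these edges end. To map out of the Leavitt path algebra of such a graph it suffices to give images
of the new edges and ghosts satisfying the relations that involve them (`IsAttachedEdgeFamily`).
In `E(v₀,n)` the head paths `p_k = e_k ⋯ e_1` satisfy `p_k^* p_j = δ_{kj} v₀` and `p_k p_k^* = v_k`,
the relations of the edges `e'_k` of `E'(v₀,n)`; conversely `e'_k e'^*_{k-1}` satisfies those of
`e_k`. The two maps are mutually inverse because `e'_k e'^*_{k-1} e'_{k-1} = e'_k v₀ = e'_k`.
-/

namespace DGraph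

variable {R : Type} [CommRing R] {G : DGraph}

section Relations

open Classical

theorem Vq_mul_Vq (u v : G.V) : Vq R G u * Vq R G v = if u = v then Vq R G u else 0 := by
  have h := RingQuot.mkAlgHom_rel R (LRel.vmul (R := R) (G := G) u v)
  rwa [map_mul, apply_ite (RingQuot.mkAlgHom R (LRel R G)), map_zero] at h

theorem Vq_s_mul_Eq' (e : G.E) : Vq R G (G.s e) * Eq' R G e = Eq' R G e := by
  have h := RingQuot.mkAlgHom_rel R (LRel.se (R := R) (G := G) e)
  rwa [map_mul] at h

theorem Eq'_mul_Vq_r (e : G.E) : Eq' R G e * Vq R G (G.r e) = Eq' R G e := by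
  have h := RingQuot.mkAlgHom_rel R (LRel.er (R := R) (G := G) e)
  rwa [map_mul] at h

theorem Vq_r_mul_Gq (e : G.E) : Vq R G (G.r e) * Gq R G e = Gq R G e := by
  have h := RingQuot.mkAlgHom_rel R (LRel.rg (R := R) (G := G) e)
  rwa [map_mul] at h

theorem Gq_mul_Vq_s (e : G.E) : Gq R G e * Vq R G (G.s e) = Gq R G e := by
  have h := RingQuot.mkAlgHom_rel R (LRel.gs (R := R) (G := G) e)
  rwa [map_mul] at h

theorem Gq_mul_Eq' (e f : G.E) :
    Gq R G e * Eq' R G f = if e = f then Vq R G (G.r e) else 0 := by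
  have h := RingQuot.mkAlgHom_rel R (LRel.ck1 (R := R) (G := G) e f)
  rwa [map_mul, apply_ite (RingQuot.mkAlgHom R (LRel R G)), map_zero] at h

theorem sum_Eq'_mul_Gq (v : G.V) (h : IsRegular G v) :
    ∑ e ∈ h.1.toFinset, Eq' R G e * Gq R G e = Vq R G v := by
  have h' := RingQuot.mkAlgHom_rel R (LRel.ck2 (R := R) (G := G) v h)
  simpa only [map_sum, map_mul, Eq', Gq, Vq] using h'

structure LeavittFamily (G : DGraph) (A : Type) [Ring A] where
  v : G.V → A
  e : G.E → A
  g : G.E → A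
  v_mul_v : ∀ u w, v u * v w = if u = w then v u else 0
  v_s_mul_e : ∀ x, v (G.s x) * e x = e x
  e_mul_v_r : ∀ x, e x * v (G.r x) = e x
  v_r_mul_g : ∀ x, v (G.r x) * g x = g x
  g_mul_v_s : ∀ x, g x * v (G.s x) = g x
  g_mul_e : ∀ x y, g x * e y = if x = y then v (G.r x) else 0
  sum_e_mul_g : ∀ u (h : IsRegular G u), ∑ x ∈ h.1.toFinset, e x * g x = v u

end Relations

namespace LeavittFamily

variable {A : Type} [Ring A] [Algebra R A] (F : LeavittFamily G A)

def gen : Gen G → A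
  | .vert u => F.v u
  | .edge x => F.e x
  | .ghost x => F.g x

theorem lift_rel {x y : FA R G} (h : LRel R G x y) :
    FreeAlgebra.lift R F.gen x = FreeAlgebra.lift R F.gen y := by
  induction h with
  | vmul u w => simpa [gv, apply_ite (FreeAlgebra.lift R F.gen), gen] using F.v_mul_v u w
  | se x => simpa [gv, ge, gen] using F.v_s_mul_e x
  | er x => simpa [gv, ge, gen] using F.e_mul_v_r x
  | rg x => simpa [gv, gg, gen] using F.v_r_mul_g x
  | gs x => simpa [gv, gg, gen] using F.g_mul_v_s x
  | ck1 x y => simpa [gv, ge, gg, apply_ite (FreeAlgebra.lift R F.gen), gen] using F.g_mul_e x y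
  | ck2 u h => simpa [gv, ge, gg, gen] using F.sum_e_mul_g u h

def lift : LPA R G →ₐ[R] A :=
  RingQuot.liftAlgHom R ⟨FreeAlgebra.lift R F.gen, fun _ _ h => F.lift_rel h⟩

@[simp]
theorem lift_Vq (u : G.V) : F.lift (Vq R G u) = F.v u := by
  simp [lift, Vq, gv, gen]

@[simp]
theorem lift_Eq' (x : G.E) : F.lift (Eq' R G x) = F.e x := by
  simp [lift, Eq', ge, gen]

@[simp]
theorem lift_Gq (x : G.E) : F.lift (Gq R G x) = F.g x := by
  simp [lift, Gq, gg, gen]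

end LeavittFamily

theorem LPA.algHom_ext {A : Type} [Ring A] [Algebra R A] {f f' : LPA R G →ₐ[R] A}
    (hv : ∀ u, f (Vq R G u) = f' (Vq R G u)) (he : ∀ x, f (Eq' R G x) = f' (Eq' R G x))
    (hg : ∀ x, f (Gq R G x) = f' (Gq R G x)) : f = f' := by
  refine RingQuot.ringQuot_ext' _ _ _ (FreeAlgebra.hom_ext (funext fun x => ?_))
  cases x with
  | vert u => exact hv u
  | edge x => exact he x
  | ghost x => exact hg x

abbrev attachEdges (G : DGraph) (n : ℕ) (ρ : Fin n → G.V ⊕ Fin n) : DGraph where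
  V := G.V ⊕ Fin n
  E := G.E ⊕ Fin n
  s := Sum.elim (fun e => Sum.inl (G.s e)) Sum.inr
  r := Sum.elim (fun e => Sum.inl (G.r e)) ρ

section AttachEdges

variable {n : ℕ} {ρ ρ' : Fin n → G.V ⊕ Fin n}

theorem attachEdges_source_eq_inr (i : Fin n) :
    {x | (G.attachEdges n ρ).s x = Sum.inr i} = {Sum.inr i} := by
  ext (x | x) <;> simp

theorem Eq'_inr_mul_Gq_inr (i : Fin n) :
    Eq' R (G.attachEdges n ρ) (Sum.inr i) * Gq R _ (Sum.inr i) = Vq R _ (Sum.inr i) := by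
  have hreg : IsRegular (G.attachEdges n ρ) (Sum.inr i) := by
    rw [IsRegular, attachEdges_source_eq_inr]
    exact ⟨Set.finite_singleton _, Set.singleton_nonempty _⟩
  have h := sum_Eq'_mul_Gq (R := R) _ hreg
  rwa [show hreg.1.toFinset = {Sum.inr i} by ext (x | x) <;> simp,
    Finset.sum_singleton] at h

theorem Eq'_inr_mul_Vq (i : Fin n) :
    Eq' R (G.attachEdges n ρ) (Sum.inr i) * Vq R _ (ρ i) = Eq' R _ (Sum.inr i) :=
  Eq'_mul_Vq_r (G := G.attachEdges n ρ) (Sum.inr i)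

theorem Vq_mul_Gq_inr (i : Fin n) :
    Vq R (G.attachEdges n ρ) (ρ i) * Gq R _ (Sum.inr i) = Gq R _ (Sum.inr i) :=
  Vq_r_mul_Gq (G := G.attachEdges n ρ) (Sum.inr i)

theorem Vq_inr_mul_Eq'_inr (i : Fin n) :
    Vq R (G.attachEdges n ρ) (Sum.inr i) * Eq' R _ (Sum.inr i) = Eq' R _ (Sum.inr i) :=
  Vq_s_mul_Eq' (G := G.attachEdges n ρ) (Sum.inr i)

theorem Gq_inr_mul_Vq_inr (i : Fin n) :
    Gq R (G.attachEdges n ρ) (Sum.inr i) * Vq R _ (Sum.inr i) = Gq R _ (Sum.inr i) :=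
  Gq_mul_Vq_s (G := G.attachEdges n ρ) (Sum.inr i)

open Classical in
theorem Gq_inr_mul_Eq'_inr (i j : Fin n) :
    Gq R (G.attachEdges n ρ) (Sum.inr i) * Eq' R _ (Sum.inr j) =
      if i = j then Vq R _ (ρ i) else 0 := by
  simpa using Gq_mul_Eq' (R := R) (G := G.attachEdges n ρ) (Sum.inr i) (Sum.inr j)

open Classical in
/-- The relations of the new edges of `G.attachEdges n ρ` and their ghosts, for candidate images
`x i`, `y i` in the Leavitt path algebra of the same graph with the new edges rerouted by `ρ'`. -/
structure IsAttachedEdgeFamily (ρ : Fin n → G.V ⊕ Fin n)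
    (x y : Fin n → LPA R (G.attachEdges n ρ')) : Prop where
  mul_Vq : ∀ i, x i * Vq R _ (ρ i) = x i
  Vq_mul : ∀ i, Vq R _ (ρ i) * y i = y i
  y_mul_x : ∀ i j, y i * x j = if i = j then Vq R _ (ρ i) else 0
  x_mul_y : ∀ i, x i * y i = Vq R _ (Sum.inr i)

namespace IsAttachedEdgeFamily

variable {x y : Fin n → LPA R (G.attachEdges n ρ')} (h : IsAttachedEdgeFamily ρ x y)
include h

-- `x i = x i * (y i * x i) = (x i * y i) * x i`
theorem Vq_inr_mul (i : Fin n) : Vq R _ (Sum.inr i) * x i = x i := by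
  rw [← h.x_mul_y, mul_assoc, h.y_mul_x, if_pos rfl, h.mul_Vq]

theorem mul_Vq_inr (i : Fin n) : y i * Vq R _ (Sum.inr i) = y i := by
  rw [← h.x_mul_y, ← mul_assoc, h.y_mul_x, if_pos rfl, h.Vq_mul]

open Classical in
@[simps]
def family : LeavittFamily (G.attachEdges n ρ) (LPA R (G.attachEdges n ρ')) where
  v := Vq R (G.attachEdges n ρ')
  e := Sum.elim (fun e => Eq' R _ (Sum.inl e)) x
  g := Sum.elim (fun e => Gq R _ (Sum.inl e)) y
  v_mul_v := Vq_mul_Vq (G := G.attachEdges n ρ')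
  v_s_mul_e := by
    rintro (e | i)
    · exact Vq_s_mul_Eq' (G := G.attachEdges n ρ') (Sum.inl e)
    · exact h.Vq_inr_mul i
  e_mul_v_r := by
    rintro (e | i)
    · exact Eq'_mul_Vq_r (G := G.attachEdges n ρ') (Sum.inl e)
    · exact h.mul_Vq i
  v_r_mul_g := by
    rintro (e | i)
    · exact Vq_r_mul_Gq (G := G.attachEdges n ρ') (Sum.inl e)
    · exact h.Vq_mul i
  g_mul_v_s := by
    rintro (e | i)
    · exact Gq_mul_Vq_s (G := G.attachEdges n ρ') (Sum.inl e)
    · exact h.mul_Vq_inr i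
  g_mul_e := by
    rintro (e | i) (f | j)
    · exact Gq_mul_Eq' (G := G.attachEdges n ρ') (Sum.inl e) (Sum.inl f)
    · have h0 : Gq R (G.attachEdges n ρ') (Sum.inl e) * Vq R _ (Sum.inr j) = 0 := by
        rw [← Gq_mul_Vq_s (G := G.attachEdges n ρ') (Sum.inl e), mul_assoc, Vq_mul_Vq]
        simp
      show Gq R _ (Sum.inl e) * x j = _
      rw [if_neg Sum.inl_ne_inr, ← h.Vq_inr_mul j, ← mul_assoc, h0, zero_mul]
    · have h0 : Vq R (G.attachEdges n ρ') (Sum.inr i) * Eq' R _ (Sum.inl f) = 0 := by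
        rw [← Vq_s_mul_Eq' (G := G.attachEdges n ρ') (Sum.inl f), ← mul_assoc, Vq_mul_Vq]
        simp
      show y i * Eq' R _ (Sum.inl f) = _
      rw [if_neg Sum.inr_ne_inl, ← h.mul_Vq_inr i, mul_assoc, h0, mul_zero]
    · simpa using h.y_mul_x i j
  sum_e_mul_g := by
    rintro (u | i) hreg
    · rw [← sum_Eq'_mul_Gq (G := G.attachEdges n ρ') (Sum.inl u) hreg]
      refine Finset.sum_congr rfl fun x hx => ?_
      rcases x with x | i
      · rfl
      · simp at hx
    · rw [show hreg.1.toFinset = {Sum.inr i} by ext (x | x) <;> simp, Finset.sum_singleton]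
      exact h.x_mul_y i

end IsAttachedEdgeFamily

end AttachEdges

end DGraph

section HeadAndFan

variable (R : Type) [CommRing R] {G : DGraph} (v0 : G.V) {n : ℕ}

def headRange (v0 : G.V) (n : ℕ) : Fin n → G.V ⊕ Fin n := fun i =>
  if _ : (i : ℕ) = 0 then Sum.inl v0
  else Sum.inr ⟨(i : ℕ) - 1, Nat.lt_of_le_of_lt (Nat.sub_le _ _) i.isLt⟩

theorem attachHead_eq_attachEdges (G : DGraph) (v0 : G.V) (n : ℕ) :
    attachHead G v0 n = G.attachEdges n (headRange v0 n) := rfl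

theorem attachFan_eq_attachEdges (G : DGraph) (v0 : G.V) (n : ℕ) :
    attachFan G v0 n = G.attachEdges n (fun _ => Sum.inl v0) := rfl

@[simp]
theorem headRange_zero (h : 0 < n) : headRange v0 n ⟨0, h⟩ = Sum.inl v0 := rfl

@[simp]
theorem headRange_succ (k : ℕ) (h : k + 1 < n) :
    headRange v0 n ⟨k + 1, h⟩ = Sum.inr ⟨k, by omega⟩ := rfl

local notation "Hd" => DGraph.attachEdges G n (headRange v0 n)
local notation "Fn" => DGraph.attachEdges G n (fun _ => Sum.inl v0)

/-- The path from the `k`-th head vertex down to `v0` (0-indexed: `e_{k+1} ⋯ e_1` in the paper). -/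
def headPath : (k : ℕ) → k < n → LPA R Hd
  | 0, h => Eq' R _ (Sum.inr ⟨0, h⟩)
  | k + 1, h => Eq' R _ (Sum.inr ⟨k + 1, h⟩) * headPath k (by omega)

def headGhostPath : (k : ℕ) → k < n → LPA R Hd
  | 0, h => Gq R _ (Sum.inr ⟨0, h⟩)
  | k + 1, h => headGhostPath k (by omega) * Gq R _ (Sum.inr ⟨k + 1, h⟩)

theorem headPath_mul_Vq : ∀ (k : ℕ) (h : k < n),
    headPath R v0 k h * Vq R _ (Sum.inl v0) = headPath R v0 k h
  | 0, h => Eq'_inr_mul_Vq (ρ := headRange v0 n) ⟨0, h⟩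
  | k + 1, h => by rw [headPath, mul_assoc, headPath_mul_Vq k]

theorem Vq_mul_headGhostPath : ∀ (k : ℕ) (h : k < n),
    Vq R _ (Sum.inl v0) * headGhostPath R v0 k h = headGhostPath R v0 k h
  | 0, h => Vq_mul_Gq_inr (ρ := headRange v0 n) ⟨0, h⟩
  | k + 1, h => by rw [headGhostPath, ← mul_assoc, Vq_mul_headGhostPath k]

theorem headGhostPath_mul_Vq (k : ℕ) (h : k < n) :
    headGhostPath R v0 k h * Vq R _ (Sum.inr ⟨k, h⟩) = headGhostPath R v0 k h := by
  cases k with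
  | zero => exact Gq_inr_mul_Vq_inr (ρ := headRange v0 n) ⟨0, h⟩
  | succ k => rw [headGhostPath, mul_assoc, Gq_inr_mul_Vq_inr]

theorem headPath_mul_headGhostPath : ∀ (k : ℕ) (h : k < n),
    headPath R v0 k h * headGhostPath R v0 k h = Vq R _ (Sum.inr ⟨k, h⟩)
  | 0, h => Eq'_inr_mul_Gq_inr (ρ := headRange v0 n) ⟨0, h⟩
  | k + 1, h => by
    have hρ : Vq R Hd (Sum.inr ⟨k, by omega⟩) = Vq R Hd (headRange v0 n ⟨k + 1, h⟩) := rfl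
    rw [headPath, headGhostPath, mul_assoc, ← mul_assoc (headPath R v0 k _),
      headPath_mul_headGhostPath k, hρ, Vq_mul_Gq_inr, Eq'_inr_mul_Gq_inr]

open Classical in
theorem headGhostPath_mul_headPath : ∀ (i j : ℕ) (hi : i < n) (hj : j < n),
    headGhostPath R v0 i hi * headPath R v0 j hj = if i = j then Vq R _ (Sum.inl v0) else 0
  | 0, 0, hi, hj => Gq_inr_mul_Eq'_inr (ρ := headRange v0 n) ⟨0, hi⟩ ⟨0, hj⟩
  | 0, j + 1, hi, hj => by
    rw [headGhostPath, headPath, ← mul_assoc, Gq_inr_mul_Eq'_inr]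
    simp
  | i + 1, 0, hi, hj => by
    rw [headGhostPath, headPath, mul_assoc, Gq_inr_mul_Eq'_inr]
    simp
  | i + 1, j + 1, hi, hj => by
    rw [headGhostPath, headPath, mul_assoc, ← mul_assoc (Gq R _ _), Gq_inr_mul_Eq'_inr]
    by_cases hij : i = j
    · subst hij
      simp [← mul_assoc, headGhostPath_mul_Vq, headGhostPath_mul_headPath]
    · simp [hij]

theorem isAttachedEdgeFamily_headPath :
    IsAttachedEdgeFamily (fun _ : Fin n => Sum.inl v0)
      (fun i => headPath R v0 i i.isLt) (fun i => headGhostPath R v0 i i.isLt) where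
  mul_Vq i := headPath_mul_Vq R v0 i i.isLt
  Vq_mul i := Vq_mul_headGhostPath R v0 i i.isLt
  y_mul_x i j := by simp [headGhostPath_mul_headPath, Fin.val_inj]
  x_mul_y i := headPath_mul_headGhostPath R v0 i i.isLt

/-- The head edge `k` becomes `e'_k e'_{k-1}^*` in the fan, which telescopes so that the head
path `k` becomes `e'_k`. -/
def fanHeadEdge : (k : ℕ) → k < n → LPA R Fn
  | 0, h => Eq' R _ (Sum.inr ⟨0, h⟩)
  | k + 1, h => Eq' R _ (Sum.inr ⟨k + 1, h⟩) * Gq R _ (Sum.inr ⟨k, by omega⟩)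

def fanHeadGhost : (k : ℕ) → k < n → LPA R Fn
  | 0, h => Gq R _ (Sum.inr ⟨0, h⟩)
  | k + 1, h => Eq' R _ (Sum.inr ⟨k, by omega⟩) * Gq R _ (Sum.inr ⟨k + 1, h⟩)

theorem isAttachedEdgeFamily_fanHeadEdge :
    IsAttachedEdgeFamily (headRange v0 n)
      (fun i => fanHeadEdge R v0 i i.isLt) (fun i => fanHeadGhost R v0 i i.isLt) where
  mul_Vq := by
    rintro ⟨_ | k, h⟩
    · exact Eq'_inr_mul_Vq ⟨0, h⟩
    · exact (mul_assoc _ _ _).trans (congrArg _ (Gq_inr_mul_Vq_inr _))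
  Vq_mul := by
    rintro ⟨_ | k, h⟩
    · exact Vq_mul_Gq_inr ⟨0, h⟩
    · exact (mul_assoc _ _ _).symm.trans (congrArg (· * _) (Vq_inr_mul_Eq'_inr _))
  y_mul_x := by
    rintro ⟨_ | i, hi⟩ ⟨_ | j, hj⟩
    · exact Gq_inr_mul_Eq'_inr _ _
    · simp [fanHeadEdge, fanHeadGhost, ← mul_assoc, Gq_inr_mul_Eq'_inr]
    · simp [fanHeadEdge, fanHeadGhost, mul_assoc, Gq_inr_mul_Eq'_inr]
    · have hv : Vq R Fn (Sum.inl v0) * Gq R Fn (Sum.inr ⟨i, by omega⟩) = Gq R _ _ :=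
        Vq_mul_Gq_inr _
      simp only [fanHeadEdge, fanHeadGhost]
      rw [mul_assoc, ← mul_assoc (Gq R _ _), Gq_inr_mul_Eq'_inr]
      by_cases hij : i = j
      · subst hij
        simp [hv, Eq'_inr_mul_Gq_inr]
      · simp [hij]
  x_mul_y := by
    rintro ⟨_ | k, h⟩
    · exact Eq'_inr_mul_Gq_inr _
    · have hv : Eq' R Fn (Sum.inr ⟨k + 1, h⟩) * Vq R Fn (Sum.inl v0) = Eq' R _ _ :=
        Eq'_inr_mul_Vq _
      simp only [fanHeadEdge, fanHeadGhost]
      rw [mul_assoc, ← mul_assoc (Gq R _ _), Gq_inr_mul_Eq'_inr, if_pos rfl, ← mul_assoc, hv]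
      exact Eq'_inr_mul_Gq_inr _

def headToFan : LPA R Hd →ₐ[R] LPA R Fn := (isAttachedEdgeFamily_fanHeadEdge R v0).family.lift

def fanToHead : LPA R Fn →ₐ[R] LPA R Hd := (isAttachedEdgeFamily_headPath R v0).family.lift

theorem headToFan_headPath : ∀ (k : ℕ) (h : k < n),
    headToFan R v0 (headPath R v0 k h) = Eq' R _ (Sum.inr ⟨k, h⟩)
  | 0, h => by simp [headToFan, headPath, fanHeadEdge]
  | k + 1, h => by
    simp only [headPath, map_mul, headToFan_headPath k]
    simp only [headToFan, LeavittFamily.lift_Eq', IsAttachedEdgeFamily.family_e, Sum.elim_inr,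
      fanHeadEdge]
    rw [mul_assoc, Gq_inr_mul_Eq'_inr, if_pos rfl]
    exact Eq'_inr_mul_Vq _

theorem headToFan_headGhostPath : ∀ (k : ℕ) (h : k < n),
    headToFan R v0 (headGhostPath R v0 k h) = Gq R _ (Sum.inr ⟨k, h⟩)
  | 0, h => by simp [headToFan, headGhostPath, fanHeadGhost]
  | k + 1, h => by
    simp only [headGhostPath, map_mul, headToFan_headGhostPath k]
    simp only [headToFan, LeavittFamily.lift_Gq, IsAttachedEdgeFamily.family_g, Sum.elim_inr,
      fanHeadGhost]
    rw [← mul_assoc, Gq_inr_mul_Eq'_inr, if_pos rfl]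
    exact Vq_mul_Gq_inr _

theorem fanToHead_fanHeadEdge : ∀ (k : ℕ) (h : k < n),
    fanToHead R v0 (fanHeadEdge R v0 k h) = Eq' R _ (Sum.inr ⟨k, h⟩)
  | 0, h => by simp [fanToHead, headPath, fanHeadEdge]
  | k + 1, h => by
    simp only [fanHeadEdge, map_mul, fanToHead, LeavittFamily.lift_Eq', LeavittFamily.lift_Gq,
      IsAttachedEdgeFamily.family_e, IsAttachedEdgeFamily.family_g, Sum.elim_inr]
    rw [headPath, mul_assoc, headPath_mul_headGhostPath]
    exact Eq'_inr_mul_Vq (ρ := headRange v0 n) ⟨k + 1, h⟩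

theorem fanToHead_fanHeadGhost : ∀ (k : ℕ) (h : k < n),
    fanToHead R v0 (fanHeadGhost R v0 k h) = Gq R _ (Sum.inr ⟨k, h⟩)
  | 0, h => by simp [fanToHead, headGhostPath, fanHeadGhost]
  | k + 1, h => by
    simp only [fanHeadGhost, map_mul, fanToHead, LeavittFamily.lift_Eq', LeavittFamily.lift_Gq,
      IsAttachedEdgeFamily.family_e, IsAttachedEdgeFamily.family_g, Sum.elim_inr]
    rw [headGhostPath, ← mul_assoc, headPath_mul_headGhostPath]
    exact Vq_mul_Gq_inr (ρ := headRange v0 n) ⟨k + 1, h⟩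

theorem headToFan_comp_fanToHead :
    (headToFan R v0).comp (fanToHead R v0) = AlgHom.id R (LPA R Fn) := by
  refine LPA.algHom_ext (by simp [headToFan, fanToHead]) ?_ ?_
  · rintro (e | ⟨k, h⟩)
    · simp [headToFan, fanToHead]
    · simp [fanToHead, headToFan_headPath]
  · rintro (e | ⟨k, h⟩)
    · simp [headToFan, fanToHead]
    · simp [fanToHead, headToFan_headGhostPath]

theorem fanToHead_comp_headToFan :
    (fanToHead R v0).comp (headToFan R v0) = AlgHom.id R (LPA R Hd) := by
  refine LPA.algHom_ext (by simp [headToFan, fanToHead]) ?_ ?_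
  · rintro (e | ⟨k, h⟩)
    · simp [headToFan, fanToHead]
    · simp [headToFan, fanToHead_fanHeadEdge]
  · rintro (e | ⟨k, h⟩)
    · simp [headToFan, fanToHead]
    · simp [headToFan, fanToHead_fanHeadGhost]

def headFanEquiv : LPA R Hd ≃ₐ[R] LPA R Fn :=
  AlgEquiv.ofAlgHom (headToFan R v0) (fanToHead R v0)
    (headToFan_comp_fanToHead R v0) (fanToHead_comp_headToFan R v0)

end HeadAndFan

theorem stmt1_general (R : Type) [CommRing R] (G : DGraph) (v0 : G.V) (n : ℕ) :
    Nonempty (LPA R (attachHead G v0 n) ≃ₐ[R] LPA R (attachFan G v0 n)) := by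
  rw [attachHead_eq_attachEdges, attachFan_eq_attachEdges]
  exact ⟨headFanEquiv R v0⟩

theorem stmt1 (R : Type) [CommRing R] (G : DGraph) (v0 : G.V) (n : ℕ) (hn : 0 < n) :
    Nonempty (LPA R (attachHead G v0 n) ≃ₐ[R] LPA R (attachFan G v0 n)) :=
  stmt1_general R G v0 n
end
end

section
/- Let E be a directed graph and X ⊊ E^0 a finite subset. There exists a row-finite, path-finite directed forest T in E with T^r = X and T^0 = H_E(X) if and only if the hereditary closure H_E(X) of X is finite. -/
/-!
If such a forest `T` exists, König's lemma applies to it: row-finiteness and the absence of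
forward infinite paths make the descendants of every vertex a finite set, and the absence of
backward infinite paths forces every vertex of `T` to descend from one of the finitely many
roots in `X`, so `H_E(X) = T^0` is finite. Conversely, a breadth-first search forest works:
every `w ∈ H_E(X) \ X` receives one edge from a vertex strictly closer to `X`. The distance to
`X` strictly increases along the edges, so the forest is acyclic, and it has finitely many edges
because `H_E(X)` is finite.
-/

noncomputable section

open DGraph

/-- A directed forest in `G`: an acyclic subgraph in which each vertex receives at
most one edge. -/
structure Forest (G : DGraph) where
  TV : Set G.V
  TE : Set G.E
  src_mem : ∀ e ∈ TE, G.s e ∈ TV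
  rng_mem : ∀ e ∈ TE, G.r e ∈ TV
  atMostOne : ∀ e ∈ TE, ∀ f ∈ TE, G.r e = G.r f → e = f
  acyclic : ∀ (l : List G.E) (hl : l ≠ []), (∀ e ∈ l, e ∈ TE) →
    List.Chain' (fun e f => G.r e = G.s f) l → G.r (l.getLast hl) ≠ G.s (l.head hl)

/-- `T` is row-finite: each vertex emits finitely many `T`-edges. -/
def Forest.RowFinite {G : DGraph} (T : Forest G) : Prop :=
  ∀ v : G.V, {e | e ∈ T.TE ∧ G.s e = v}.Finite

/-- `T` is path-finite: it admits no vertex-simple (right-, left-, or bi-)infinite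
path. -/
def Forest.PathFinite {G : DGraph} (T : Forest G) : Prop :=
  (¬ ∃ f : ℕ → G.E, (∀ n, f n ∈ T.TE) ∧ (∀ n, G.r (f n) = G.s (f (n + 1))) ∧
      Function.Injective fun n => G.s (f n)) ∧
  (¬ ∃ f : ℕ → G.E, (∀ n, f n ∈ T.TE) ∧ (∀ n, G.r (f (n + 1)) = G.s (f n)) ∧
      Function.Injective fun n => G.s (f n))

/-- `T^r`: the roots of the forest, i.e. the vertices of `T` receiving no `T`-edge. -/
def Forest.roots {G : DGraph} (T : Forest G) : Set G.V :=
  {v | v ∈ T.TV ∧ ∀ e ∈ T.TE, G.r e ≠ v}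

theorem exists_chain_of_forall_exists {α β : Type*} {P : β → Prop} {p q : β → α} {S : Set α}
    (h : ∀ a ∈ S, ∃ b, P b ∧ p b = a ∧ q b ∈ S) {a₀ : α} (ha₀ : a₀ ∈ S) :
    ∃ f : ℕ → β, (∀ n, P (f n)) ∧ ∀ n, q (f n) = p (f (n + 1)) := by
  choose g hgP hgp hgq using h
  let next : S → S := fun a => ⟨q (g a a.2), hgq a a.2⟩
  let seq : ℕ → S := fun n => next^[n] ⟨a₀, ha₀⟩
  refine ⟨fun n => g (seq n) (seq n).2, fun n => hgP _ _, fun n => ?_⟩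
  rw [hgp]
  simp only [seq, Function.iterate_succ_apply', next]

namespace Forest

variable {G : DGraph} (T : Forest G)

theorem r_ne_s_of_chain {f : ℕ → G.E} {m : ℕ} (hmem : ∀ k ≤ m, f k ∈ T.TE)
    (hch : ∀ k < m, G.r (f k) = G.s (f (k + 1))) : G.r (f m) ≠ G.s (f 0) := by
  have hne : List.ofFn (fun i : Fin (m + 1) => f i) ≠ [] := by simp
  have h := T.acyclic _ hne
    (by
      simp only [List.mem_ofFn, forall_exists_index]
      rintro _ i rfl
      exact hmem i (Nat.lt_succ_iff.mp i.isLt))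
    (by
      rw [List.Chain', List.isChain_iff_getElem]
      intro i hi
      simp only [List.length_ofFn] at hi
      simp only [List.getElem_ofFn]
      exact hch i (by omega))
  rwa [List.getLast_ofFn, List.head_ofFn] at h

theorem injective_s_of_forward_chain {f : ℕ → G.E} (hmem : ∀ n, f n ∈ T.TE)
    (hch : ∀ n, G.r (f n) = G.s (f (n + 1))) : Function.Injective fun n => G.s (f n) := by
  intro n m h
  by_contra hne
  wlog hlt : n < m generalizing n m
  · exact this h.symm (Ne.symm hne) (by omega)
  refine T.r_ne_s_of_chain (f := fun k => f (n + k)) (m := m - 1 - n) (fun _ _ => hmem _)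
    (fun k _ => hch (n + k)) ?_
  have hm : n + (m - 1 - n) + 1 = m := by omega
  simp only [Nat.add_zero]
  rw [hch, hm]
  exact h.symm

theorem injective_s_of_backward_chain {f : ℕ → G.E} (hmem : ∀ n, f n ∈ T.TE)
    (hch : ∀ n, G.r (f (n + 1)) = G.s (f n)) : Function.Injective fun n => G.s (f n) := by
  intro n m h
  by_contra hne
  wlog hlt : n < m generalizing n m
  · exact this h.symm (Ne.symm hne) (by omega)
  refine T.r_ne_s_of_chain (f := fun k => f (m - k)) (m := m - 1 - n) (fun _ _ => hmem _)
    (fun k hk => ?_) ?_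
  · have hk' : m - k = m - (k + 1) + 1 := by omega
    rw [hk', hch]
  · have hm : m - (m - 1 - n) = n + 1 := by omega
    simp only [Nat.sub_zero]
    rw [hm, hch]
    exact h

theorem rowFinite_of_finite (hT : T.TE.Finite) : T.RowFinite :=
  fun _ => hT.subset fun _ he => he.1

theorem pathFinite_of_finite (hT : T.TE.Finite) : T.PathFinite := by
  constructor <;>
  · rintro ⟨f, hmem, -, hinj⟩
    exact Set.infinite_of_injective_forall_mem (Function.Injective.of_comp (f := G.s) hinj)
      hmem hT

def Adj (u w : G.V) : Prop := ∃ e ∈ T.TE, G.s e = u ∧ G.r e = w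

def descendants (u : G.V) : Set G.V := {v | Relation.ReflTransGen T.Adj u v}

theorem exists_root_mem_descendants (hPF : T.PathFinite) {v : G.V} (hv : v ∈ T.TV) :
    ∃ u ∈ T.roots, v ∈ T.descendants u := by
  by_contra! hv'
  set S := {w | w ∈ T.TV ∧ ∀ u ∈ T.roots, w ∉ T.descendants u}
  have hparent : ∀ w ∈ S, ∃ e, e ∈ T.TE ∧ G.r e = w ∧ G.s e ∈ S := by
    rintro w ⟨hwTV, hw⟩
    obtain ⟨e, he, hre⟩ : ∃ e ∈ T.TE, G.r e = w := by
      by_contra! h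
      exact hw w ⟨hwTV, h⟩ .refl
    exact ⟨e, he, hre, T.src_mem e he,
      fun u hu hdesc => hw u hu (hdesc.tail ⟨e, he, rfl, hre⟩)⟩
  obtain ⟨f, hmem, hch⟩ := exists_chain_of_forall_exists hparent ⟨hv, hv'⟩
  exact hPF.2 ⟨f, hmem, fun n => (hch n).symm,
    T.injective_s_of_backward_chain hmem fun n => (hch n).symm⟩

theorem descendants_subset_insert_biUnion (u : G.V) :
    T.descendants u ⊆ insert u (⋃ e ∈ {e | e ∈ T.TE ∧ G.s e = u}, T.descendants (G.r e)) := by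
  intro w hw
  rcases Relation.ReflTransGen.cases_head hw with rfl | ⟨c, ⟨e, he, hse, rfl⟩, hc⟩
  · exact Set.mem_insert _ _
  · exact Set.mem_insert_of_mem _ (Set.mem_biUnion ⟨he, hse⟩ hc)

theorem finite_descendants (hRF : T.RowFinite) (hPF : T.PathFinite) (u : G.V) :
    (T.descendants u).Finite := by
  by_contra hu
  set S := {v | (T.descendants v).Infinite}
  have hchild : ∀ v ∈ S, ∃ e, e ∈ T.TE ∧ G.s e = v ∧ G.r e ∈ S := by
    intro v hv
    by_contra! h
    exact hv <| (((hRF v).biUnion fun e he => Set.not_infinite.1 (h e he.1 he.2)).insert v).subset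
      (T.descendants_subset_insert_biUnion v)
  obtain ⟨f, hmem, hch⟩ := exists_chain_of_forall_exists hchild hu
  exact hPF.1 ⟨f, hmem, hch, T.injective_s_of_forward_chain hmem hch⟩

theorem finite_TV (hRF : T.RowFinite) (hPF : T.PathFinite) (hroots : T.roots.Finite) :
    T.TV.Finite :=
  (hroots.biUnion fun u _ => T.finite_descendants hRF hPF u).subset fun _ hv => by
    obtain ⟨u, hu, hvu⟩ := T.exists_root_mem_descendants hPF hv
    exact Set.mem_biUnion hu hvu

end Forest

namespace DGraph

variable {G : DGraph}

def ReachesIn (G : DGraph) : ℕ → G.V → G.V → Prop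
  | 0, v, w => v = w
  | n + 1, v, w => ∃ u, G.ReachesIn n v u ∧ G.Step u w

theorem reaches_iff_exists_reachesIn {v w : G.V} : G.Reaches v w ↔ ∃ n, G.ReachesIn n v w := by
  constructor
  · intro h
    induction h with
    | refl => exact ⟨0, rfl⟩
    | tail _ hstep ih =>
      obtain ⟨n, hn⟩ := ih
      exact ⟨n + 1, _, hn, hstep⟩
  · rintro ⟨n, hn⟩
    induction n generalizing w with
    | zero => exact hn ▸ .refl
    | succ n ih =>
      obtain ⟨u, hu, hstep⟩ := hn
      exact (ih hu).tail hstep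

-- `sInf ∅ = 0`: the value is meaningful only on `HClosure G X`.
def rootDist (X : Set G.V) (w : G.V) : ℕ := sInf {n | ∃ v ∈ X, G.ReachesIn n v w}

theorem exists_parent_edge {X : Set G.V} {w : G.V} (hw : w ∈ HClosure G X) (hwX : w ∉ X) :
    ∃ e, G.r e = w ∧ G.s e ∈ HClosure G X ∧ rootDist X (G.s e) < rootDist X w := by
  obtain ⟨v, hv, hvw⟩ := hw
  obtain ⟨n, hn⟩ := reaches_iff_exists_reachesIn.1 hvw
  obtain ⟨x, hx, hxw⟩ : ∃ x ∈ X, G.ReachesIn (rootDist X w) x w :=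
    Nat.sInf_mem (s := {n | ∃ v ∈ X, G.ReachesIn n v w}) ⟨n, v, hv, hn⟩
  cases hdw : rootDist X w with
  | zero =>
    rw [hdw] at hxw
    exact absurd (hxw ▸ hx) hwX
  | succ n =>
    rw [hdw] at hxw
    obtain ⟨u, hu, e, rfl, rfl⟩ := hxw
    exact ⟨e, rfl, ⟨x, hx, reaches_iff_exists_reachesIn.2 ⟨n, hu⟩⟩,
      Nat.lt_succ_of_le (Nat.sInf_le ⟨x, hx, hu⟩)⟩

theorem r_getLast_ne_s_head_of_lt {α : Type*} [Preorder α] {TE : Set G.E} (d : G.V → α)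
    (hd : ∀ e ∈ TE, d (G.s e) < d (G.r e)) (l : List G.E) (hl : l ≠ [])
    (hmem : ∀ e ∈ l, e ∈ TE) (hch : List.IsChain (fun e f => G.r e = G.s f) l) :
    G.r (l.getLast hl) ≠ G.s (l.head hl) := by
  suffices d (G.s (l.head hl)) < d (G.r (l.getLast hl)) from fun h => (h ▸ this).false
  induction l with
  | nil => contradiction
  | cons e l ih =>
    cases l with
    | nil => exact hd e (hmem e (by simp))
    | cons f l =>
      obtain ⟨hef, hch⟩ := List.isChain_cons_cons.mp hch
      calc d (G.s e) < d (G.r e) := hd e (hmem e (by simp))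
        _ = d (G.s f) := by rw [hef]
        _ < d (G.r ((f :: l).getLast (by simp))) :=
          ih (by simp) (fun x hx => hmem x (List.mem_cons_of_mem e hx)) hch

def parentEdge (X : Set G.V) (w : ↥(HClosure G X \ X)) : G.E :=
  (exists_parent_edge w.2.1 w.2.2).choose

theorem r_parentEdge (X : Set G.V) (w : ↥(HClosure G X \ X)) : G.r (parentEdge X w) = w :=
  (exists_parent_edge w.2.1 w.2.2).choose_spec.1

theorem s_parentEdge_mem (X : Set G.V) (w : ↥(HClosure G X \ X)) :
    G.s (parentEdge X w) ∈ HClosure G X :=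
  (exists_parent_edge w.2.1 w.2.2).choose_spec.2.1

theorem rootDist_s_parentEdge_lt (X : Set G.V) (w : ↥(HClosure G X \ X)) :
    rootDist X (G.s (parentEdge X w)) < rootDist X (G.r (parentEdge X w)) :=
  (r_parentEdge X w).symm ▸ (exists_parent_edge w.2.1 w.2.2).choose_spec.2.2

def bfsForest (X : Set G.V) : Forest G where
  TV := HClosure G X
  TE := Set.range (parentEdge X)
  src_mem := by
    rintro _ ⟨w, rfl⟩
    exact s_parentEdge_mem X w
  rng_mem := by
    rintro _ ⟨w, rfl⟩
    exact (r_parentEdge X w).symm ▸ w.2.1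
  atMostOne := by
    rintro _ ⟨w, rfl⟩ _ ⟨w', rfl⟩ h
    rw [r_parentEdge, r_parentEdge, SetCoe.ext_iff] at h
    rw [h]
  acyclic := r_getLast_ne_s_head_of_lt (rootDist X) (by
    rintro _ ⟨w, rfl⟩
    exact rootDist_s_parentEdge_lt X w)

theorem bfsForest_roots (X : Set G.V) : (bfsForest X).roots = X := by
  ext v
  refine ⟨fun ⟨hv, hroot⟩ => ?_, fun hv => ⟨⟨v, hv, .refl⟩, ?_⟩⟩
  · by_contra hvX
    exact hroot _ ⟨⟨v, hv, hvX⟩, rfl⟩ (r_parentEdge X ⟨v, hv, hvX⟩)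
  · rintro _ ⟨w, rfl⟩ h
    exact w.2.2 (r_parentEdge X w ▸ h ▸ hv)

theorem finite_bfsForest_TE {X : Set G.V} (hX : (HClosure G X).Finite) :
    (bfsForest X).TE.Finite :=
  have : Finite ↥(HClosure G X \ X) := (hX.subset Set.sdiff_subset).to_subtype
  Set.finite_range _

end DGraph

theorem stmt7_general (G : DGraph) (X : Set G.V) (hXfin : X.Finite) :
    (∃ T : Forest G, T.RowFinite ∧ T.PathFinite ∧ T.roots = X ∧ T.TV = HClosure G X) ↔
      (HClosure G X).Finite := by
  refine ⟨?_, fun hH => ?_⟩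
  · rintro ⟨T, hRF, hPF, hroots, hTV⟩
    exact hTV ▸ T.finite_TV hRF hPF (hroots ▸ hXfin)
  · have hT := finite_bfsForest_TE hH
    exact ⟨bfsForest X, Forest.rowFinite_of_finite _ hT, Forest.pathFinite_of_finite _ hT,
      bfsForest_roots X, rfl⟩

theorem stmt7 (G : DGraph) (X : Set G.V) (hXfin : X.Finite) (hXne : X ≠ Set.univ) :
    (∃ T : Forest G, T.RowFinite ∧ T.PathFinite ∧ T.roots = X ∧ T.TV = HClosure G X) ↔
      (HClosure G X).Finite :=
  stmt7_general G X hXfin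
end
end

section
/- Let E be a finite directed graph with no sinks and no sources, X ⊊ E^0, and T a directed forest in E with T^r = X and T^0 = H_E(X). Then the T-corner graph E(T) is a finite graph with no sinks. -/
noncomputable section

open DGraph

/-- Vertices of the `T`-corner graph `E(T)`. -/
def ETV {G : DGraph} (T : Forest G) : Set G.V :=
  {v | v ∈ T.TV ∧ ¬({e : G.E | G.s e = v}.Nonempty ∧ ∀ e : G.E, G.s e = v → e ∈ T.TE)}

/-- `≥_T`: reachability by a path lying in the forest `T`. -/
def ReachesT {G : DGraph} (T : Forest G) : G.V → G.V → Prop :=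
  Relation.ReflTransGen fun v w => ∃ e ∈ T.TE, G.s e = v ∧ G.r e = w

/-- The `T`-corner graph `E(T)` (Crisp, Definition 3.1). -/
def cornerGraph {G : DGraph} (T : Forest G) : DGraph where
  V := {v : G.V // v ∈ ETV T}
  E := {p : G.E × G.V // p.1 ∉ T.TE ∧ G.s p.1 ∈ T.TV ∧ p.2 ∈ ETV T ∧
    ReachesT T (G.r p.1) p.2}
  s := fun p => ⟨G.s p.1.1, p.2.2.1, fun h => p.2.1 (h.2 p.1.1 rfl)⟩
  r := fun p => ⟨p.1.2, p.2.2.2.1⟩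

/-!
A vertex `w` of `E(T)` emits an edge `e ∉ T¹`, since otherwise it would have been removed.
Because `T⁰ = H_E(X)` is hereditary, `r(e) ∈ T⁰`, and following `T`-edges down from `r(e)`
must stop, by acyclicity and finiteness, at a vertex `u` of `E(T)`: since `E` has no sinks,
a vertex of `T⁰` outside `E(T)` can always be left along a `T`-edge.
Then `e_u` is an edge of `E(T)` leaving `w`.
-/

namespace Forest

variable {G : DGraph} (T : Forest G)

lemma exists_path_of_reachesT {a b : G.V} (h : ReachesT T a b) {e : G.E} (he : e ∈ T.TE)
    (hea : G.r e = a) :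
    ∃ (l : List G.E) (hl : l ≠ []), (∀ f ∈ l, f ∈ T.TE) ∧
      List.IsChain (fun f g => G.r f = G.s g) l ∧ l.head hl = e ∧ G.r (l.getLast hl) = b := by
  induction h using Relation.ReflTransGen.head_induction_on generalizing e with
  | refl => exact ⟨[e], by simp, by simpa using he, List.isChain_singleton _, rfl, hea⟩
  | head step _ ih =>
    obtain ⟨f, hf, hsf, hrf⟩ := step
    obtain ⟨l, hl, hmem, hchain, hhead, hlast⟩ := ih hf hrf
    refine ⟨e :: l, by simp, ?_, ?_, rfl, by rwa [List.getLast_cons hl]⟩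
    · simpa using ⟨he, hmem⟩
    · refine List.IsChain.cons_of_ne_nil hl hchain ?_
      rw [hhead, hea, hsf]

lemma not_reachesT_source {e : G.E} (he : e ∈ T.TE) : ¬ ReachesT T (G.r e) (G.s e) := by
  intro h
  obtain ⟨l, hl, hmem, hchain, hhead, hlast⟩ := T.exists_path_of_reachesT h he rfl
  exact T.acyclic l hl hmem hchain (hhead ▸ hlast)

lemma not_transGen_self (v : G.V) :
    ¬ Relation.TransGen (fun v w => ∃ e ∈ T.TE, G.s e = v ∧ G.r e = w) v v := by
  intro h
  obtain ⟨c, ⟨e, he, hse, hre⟩, hcv⟩ := Relation.TransGen.head'_iff.1 h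
  exact T.not_reachesT_source he (hre ▸ hse ▸ hcv)

lemma exists_reachesT_mem_ETV [Finite G.V] (hns : NoSinks G) {w : G.V} (hw : w ∈ T.TV) :
    ∃ u ∈ ETV T, ReachesT T w u := by
  -- acyclicity of `T` makes strict descent along `T` well-founded on the finite vertex set
  let below : G.V → G.V → Prop := fun u v =>
    Relation.TransGen (fun v w => ∃ e ∈ T.TE, G.s e = v ∧ G.r e = w) v u
  have : IsTrans G.V below := ⟨fun _ _ _ h₁ h₂ => h₂.trans h₁⟩
  have : Std.Irrefl below := ⟨T.not_transGen_self⟩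
  induction w using (Finite.wellFounded_of_trans_of_irrefl below).induction with
  | _ w ih =>
    by_cases hwE : w ∈ ETV T
    · exact ⟨w, hwE, .refl⟩
    obtain ⟨f, hsf⟩ := hns w
    have hf : f ∈ T.TE := by
      by_contra hf
      exact hwE ⟨hw, fun h => hf (h.2 f hsf)⟩
    have hstep : below (G.r f) w := .single ⟨f, hf, hsf, rfl⟩
    obtain ⟨u, hu, hru⟩ := ih (G.r f) hstep (T.rng_mem f hf)
    exact ⟨u, hu, hstep.to_reflTransGen.trans hru⟩

lemma exists_src_eq_not_mem_TE (hns : NoSinks G) {w : G.V} (hw : w ∈ ETV T) :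
    ∃ e, G.s e = w ∧ e ∉ T.TE := by
  by_contra! h
  exact hw.2 ⟨hns w, h⟩

end Forest

lemma DGraph.hereditary_HClosure (G : DGraph) (X : Set G.V) : Hereditary G (HClosure G X) :=
  fun _ ⟨x, hx, hxv⟩ _ hvw => ⟨x, hx, hxv.trans hvw⟩

theorem stmt9_general (G : DGraph) (hfin : FiniteGraph G) (hns : NoSinks G)
    (X : Set G.V) (T : Forest G)
    (hTV : T.TV = HClosure G X) :
    FiniteGraph (cornerGraph T) ∧ NoSinks (cornerGraph T) := by
  have : Finite G.V := hfin.1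
  have : Finite G.E := hfin.2
  refine ⟨⟨Subtype.finite, Subtype.finite⟩, fun ⟨w, hw⟩ => ?_⟩
  obtain ⟨e, hse, heT⟩ := T.exists_src_eq_not_mem_TE hns hw
  have hre : G.r e ∈ T.TV := by
    rw [hTV]
    exact G.hereditary_HClosure X w (hTV ▸ hw.1) _ (.single ⟨e, hse, rfl⟩)
  obtain ⟨u, hu, hru⟩ := T.exists_reachesT_mem_ETV hns hre
  exact ⟨⟨(e, u), heT, hse ▸ hw.1, hu, hru⟩, Subtype.ext hse⟩

theorem stmt9 (G : DGraph) (hfin : FiniteGraph G) (hns : NoSinks G) (hnso : NoSources G)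
    (X : Set G.V) (hXne : X ≠ Set.univ) (T : Forest G)
    (hroots : T.roots = X) (hTV : T.TV = HClosure G X) :
    FiniteGraph (cornerGraph T) ∧ NoSinks (cornerGraph T) :=
  stmt9_general G hfin hns X T hTV
end
end
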